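/- Let M be a finite R-trivial monoid and m ∈ M. Then the set of idempotents e ∈ M with e ~L̃ m is nonempty and equals the minimal ideal of the submonoid St_R(m) = {n ∈ M | m*n = m}; equivalently, an idempotent e satisfies e ~L̃ m if and only if m*e = m and e*n = e for all n ∈ M with m*n = m. Moreover this set is an L-class of M: for any idempotent e in it, the set equals {x ∈ M | Mx = Me}. -/
import Mathlib


/-- `Mx = {a*x | a ∈ M}` -/
def leftIdeal {M : Type*} [Monoid M] (x : M) : Set M := {y | ∃ a, y = a * x}

/-- `xM = {x*a | a ∈ M}` -/
def rightIdeal {M : Type*} [Monoid M] (x : M) : Set M := {y | ∃ a, y = x * a}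

/-- `m ≤_L̃ n`: for every idempotent `g`, `n*g = n` implies `m*g = m`. -/
def leTildeL {M : Type*} [Monoid M] (m n : M) : Prop :=
  ∀ g : M, g * g = g → n * g = n → m * g = m

/-- `m ~L̃ n` -/
def tildeL {M : Type*} [Monoid M] (m n : M) : Prop := leTildeL m n ∧ leTildeL n m

/-- Membership in the minimal ideal of a submonoid `S` of `M`: `x ∈ S` and `x` lies in
every nonempty two-sided ideal of `S`, i.e. `x ∈ SyS` for all `y ∈ S`. -/
def InMinimalIdeal {M : Type*} [Monoid M] (S : Set M) (x : M) : Prop :=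
  x ∈ S ∧ ∀ y ∈ S, ∃ a ∈ S, ∃ b ∈ S, x = a * y * b

/-- The right stabilizer `St_R(m) = {n | m*n = m}`. -/
def StR {M : Type*} [Monoid M] (m : M) : Set M := {n | m * n = m}

section Aux

variable {M : Type*} [Monoid M]

/-- The key R-triviality lemma: `x*a*b = x` implies `x*a = x`. -/
lemma rkey (hR : ∀ m n : M, rightIdeal m = rightIdeal n → m = n)
    (x a b : M) (h : x * a * b = x) : x * a = x := by
  refine (hR x (x * a) ?_).symm
  ext y
  constructor
  · rintro ⟨c, rfl⟩
    exact ⟨b * c, by rw [← mul_assoc, h]⟩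
  · rintro ⟨c, rfl⟩
    exact ⟨a * c, mul_assoc x a c⟩

/-- In a finite monoid, some positive power of every element is idempotent. -/
lemma exists_idem_pow [Fintype M] (x : M) : ∃ k, 0 < k ∧ x ^ k * x ^ k = x ^ k := by
  obtain ⟨i, j, hne, hij⟩ := Finite.exists_ne_map_eq_of_infinite (fun n : ℕ => x ^ n)
  wlog hlt : i < j generalizing i j
  · exact this j i hne.symm hij.symm (by omega)
  set d := j - i with hd
  have hd0 : 0 < d := by omega
  have hstep : ∀ a, i ≤ a → x ^ (a + d) = x ^ a := by
    intro a ha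
    have h1 : a + d = (a - i) + j := by omega
    have h2 : a = (a - i) + i := by omega
    rw [h1, pow_add, ← hij, ← pow_add, ← h2]
  have hmult : ∀ k a, i ≤ a → x ^ (a + k * d) = x ^ a := by
    intro k
    induction k with
    | zero => simp
    | succ k ih =>
      intro a ha
      have h3 : a + (k + 1) * d = (a + d) + k * d := by ring
      rw [h3, ih _ (by omega), hstep _ ha]
  refine ⟨d * (i + 1), Nat.mul_pos hd0 i.succ_pos, ?_⟩
  rw [← pow_add]
  have h4 : d * (i + 1) + d * (i + 1) = d * (i + 1) + (i + 1) * d := by ring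
  have h5 : i ≤ d * (i + 1) := by nlinarith
  rw [h4, hmult (i + 1) _ h5]

lemma stab_pow (m n : M) (h : m * n = m) : ∀ k, m * n ^ k = m := by
  intro k
  induction k with
  | zero => simp
  | succ k ih => rw [pow_succ, ← mul_assoc, ih, h]

lemma stab_prod (m : M) : ∀ l : List M, (∀ x ∈ l, m * x = m) → m * l.prod = m := by
  intro l
  induction l with
  | nil => simp
  | cons a t ih =>
    intro h
    rw [List.prod_cons, ← mul_assoc, h a (by simp), ih (fun x hx => h x (by simp [hx]))]

end Aux

/-- In a finite R-trivial monoid, the idempotents `~L̃`-equivalent to `m` form the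
minimal ideal of the right stabilizer of `m`, which is an `L`-class of `M`. -/
theorem idempotents_tildeL_equivalent_to_m {M : Type*} [Monoid M] [Fintype M]
    (hR : ∀ m n : M, rightIdeal m = rightIdeal n → m = n) (m : M) :
    -- the set is nonempty
    (∃ e : M, e * e = e ∧ tildeL e m) ∧
    -- it equals the minimal ideal of `St_R(m)`
    ({e : M | e * e = e ∧ tildeL e m} = {x : M | InMinimalIdeal (StR m) x}) ∧
    -- equivalent description of its members
    (∀ e : M, e * e = e →
      (tildeL e m ↔ (m * e = m ∧ ∀ n : M, m * n = m → e * n = e))) ∧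
    -- it is an `L`-class of `M`
    (∀ e : M, e * e = e → tildeL e m →
      {e' : M | e' * e' = e' ∧ tildeL e' m} = {x : M | leftIdeal x = leftIdeal e}) := by
  classical
  have key : ∀ x a b : M, x * a * b = x → x * a = x := rkey hR
  -- the equivalent characterization
  have hchar : ∀ e : M, e * e = e →
      (tildeL e m ↔ (m * e = m ∧ ∀ n : M, m * n = m → e * n = e)) := by
    intro e he
    constructor
    · rintro ⟨hem, hme⟩
      refine ⟨hme e he he, ?_⟩
      intro n hn
      obtain ⟨k, hk, hidem⟩ := exists_idem_pow n
      have hmf : m * n ^ k = m := stab_pow m n hn k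
      have hef : e * n ^ k = e := hem (n ^ k) hidem hmf
      have hk1 : n ^ k = n * n ^ (k - 1) := by
        rw [← pow_succ']
        congr 1
        omega
      rw [hk1, ← mul_assoc] at hef
      exact key e n (n ^ (k - 1)) hef
    · rintro ⟨h1, h2⟩
      constructor
      · intro g hg hmg
        exact h2 g hmg
      · intro g hg heg
        calc m * g = m * e * g := by rw [h1]
          _ = m * (e * g) := mul_assoc _ _ _
          _ = m * e := by rw [heg]
          _ = m := h1
  -- a list enumerating the right stabilizer of m
  obtain ⟨l, hmeml⟩ : ∃ l : List M, ∀ n : M, m * n = m ↔ n ∈ l := by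
    refine ⟨(Finset.univ.filter (fun n => m * n = m)).toList, fun n => ?_⟩
    simp [Finset.mem_toList]
  set z := l.prod with hz
  have hmz : m * z = m := stab_prod m l (fun x hx => (hmeml x).mpr hx)
  obtain ⟨k, hk, hzk⟩ := exists_idem_pow z
  set e0 := z ^ k with he0
  have he0idem : e0 * e0 = e0 := hzk
  have hme0 : m * e0 = m := stab_pow m z hmz k
  have he0n : ∀ n : M, m * n = m → e0 * n = e0 := by
    intro n hn
    obtain ⟨l1, l2, hl⟩ := List.append_of_mem ((hmeml n).mp hn)
    set u := l1.prod with hu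
    set v := l2.prod with hv
    have hzuv : u * (n * v) = z := by
      rw [hz, hl, List.prod_append, List.prod_cons]
    have hzz : z * z ^ (k - 1) = z ^ k := by
      rw [← pow_succ']
      congr 1
      omega
    have hmid : (u * n) * (v * z ^ (k - 1)) = z ^ k := by
      have h6 : (u * n) * (v * z ^ (k - 1)) = (u * (n * v)) * z ^ (k - 1) := by
        simp [mul_assoc]
      rw [h6, hzuv, hzz]
    have hbase : e0 * (u * n) * (v * z ^ (k - 1)) = e0 := by
      rw [mul_assoc, hmid, ← he0, he0idem]
    have hbase2 : e0 * u * (n * (v * z ^ (k - 1))) = e0 := by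
      have h7 : e0 * u * (n * (v * z ^ (k - 1))) = e0 * (u * n) * (v * z ^ (k - 1)) := by
        simp [mul_assoc]
      rw [h7, hbase]
    have h1 : e0 * (u * n) = e0 := key e0 (u * n) (v * z ^ (k - 1)) hbase
    have h2 : e0 * u = e0 := key e0 u (n * (v * z ^ (k - 1))) hbase2
    calc e0 * n = e0 * u * n := by rw [h2]
      _ = e0 * (u * n) := mul_assoc _ _ _
      _ = e0 := h1
  have he0tilde : tildeL e0 m := (hchar e0 he0idem).mpr ⟨hme0, he0n⟩
  refine ⟨⟨e0, he0idem, he0tilde⟩, ?_, hchar, ?_⟩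
  · -- equals minimal ideal of StR m
    ext x
    simp only [Set.mem_setOf_eq]
    constructor
    · rintro ⟨hx, htx⟩
      obtain ⟨hmx, hxn⟩ := (hchar x hx).mp htx
      refine ⟨hmx, fun y hy => ⟨x, hmx, x, hmx, ?_⟩⟩
      rw [hxn y hy, hx]
    · rintro ⟨hxS, hmin⟩
      obtain ⟨a, haS, b, hbS, hxe⟩ := hmin e0 hme0
      have hx' : x = a * e0 := by
        rw [hxe, mul_assoc, he0n b hbS]
      have hxn : ∀ n : M, m * n = m → x * n = x := by
        intro n hn
        calc x * n = a * e0 * n := by rw [hx']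
          _ = a * (e0 * n) := mul_assoc _ _ _
          _ = a * e0 := by rw [he0n n hn]
          _ = x := hx'.symm
      have hxx : x * x = x := hxn x hxS
      exact ⟨hxx, (hchar x hxx).mpr ⟨hxS, hxn⟩⟩
  · -- L-class
    intro e he hte
    obtain ⟨hme, hen⟩ := (hchar e he).mp hte
    ext x
    simp only [Set.mem_setOf_eq]
    constructor
    · rintro ⟨hx, htx⟩
      obtain ⟨hmx, hxn⟩ := (hchar x hx).mp htx
      have h1 : x * e = x := hxn e hme
      have h2 : e * x = e := hen x hmx
      ext y
      constructor
      · rintro ⟨a, rfl⟩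
        exact ⟨a * x, by rw [mul_assoc, h1]⟩
      · rintro ⟨a, rfl⟩
        exact ⟨a * e, by rw [mul_assoc, h2]⟩
    · intro hL
      have hxmem : x ∈ leftIdeal e := by
        rw [← hL]; exact ⟨1, (one_mul x).symm⟩
      have hemem : e ∈ leftIdeal x := by
        rw [hL]; exact ⟨1, (one_mul e).symm⟩
      obtain ⟨a, ha⟩ := hxmem
      obtain ⟨b, hb⟩ := hemem
      have h3 : m * b * x = m := by rw [mul_assoc, ← hb, hme]
      have h4 : m * b = m := key m b x h3
      have hmx : m * x = m := by
        calc m * x = m * b * x := by rw [h4]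
          _ = m := h3
      have hxn : ∀ n : M, m * n = m → x * n = x := by
        intro n hn
        calc x * n = a * e * n := by rw [ha]
          _ = a * (e * n) := mul_assoc _ _ _
          _ = a * e := by rw [hen n hn]
          _ = x := ha.symm
      have hxx : x * x = x := hxn x hmx
      exact ⟨hxx, (hchar x hxx).mpr ⟨hmx, hxn⟩⟩
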